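/- Let Γ be a vertex-transitive reflexive locally-finite relation on V. Define the kernel graph Ω by Ω(v) = Γ(v) ∩ K_v for each v. Then Ω is vertex-transitive, and moreover Ω⁻(v) \ {v} ⊆ ∂(K_v) for every v ∈ V. -/

import Mathlib

open Set Pointwise

variable {V : Type*}

/-- Image of a set under the relation. -/
def img (Γ : V → Set V) (F : Set V) : Set V := ⋃ x ∈ F, Γ x
/-- Reverse relation. -/
def rev (Γ : V → Set V) : V → Set V := fun y => {x | y ∈ Γ x}
/-- Boundary ∂(F) = Γ(F) \ F. -/
def bd (Γ : V → Set V) (F : Set V) : Set V := img Γ F \ F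
/-- ∇(F) = V \ (F ∪ Γ(F)). -/
def nab (Γ : V → Set V) (F : Set V) : Set V := (F ∪ img Γ F)ᶜ
/-- Reflexive relation. -/
def Refl (Γ : V → Set V) : Prop := ∀ x, x ∈ Γ x
/-- Locally finite relation. -/
def LocFin (Γ : V → Set V) : Prop := ∀ x, (Γ x).Finite
/-- Automorphism of the relation. -/
def IsAuto (Γ : V → Set V) (φ : V ≃ V) : Prop := ∀ x, Γ (φ x) = φ '' Γ x
/-- Vertex-transitivity. -/
def VT (Γ : V → Set V) : Prop := ∀ x y : V, ∃ φ : V ≃ V, IsAuto Γ φ ∧ φ x = y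
/-- A finite v-Moser set. -/
def MoserSet (Γ : V → Set V) (v : V) (F : Set V) : Prop :=
  F.Finite ∧ v ∈ F ∧ rev Γ v ∩ F = {v}
/-- μ(v): minimum boundary size over v-Moser sets. -/
noncomputable def mu (Γ : V → Set V) (v : V) : ℕ :=
  sInf {n | ∃ F, MoserSet Γ v F ∧ (bd Γ F).ncard = n}
/-- A v-molecule: Moser set of minimum boundary. -/
def Molecule (Γ : V → Set V) (v : V) (F : Set V) : Prop :=
  MoserSet Γ v F ∧ (bd Γ F).ncard = mu Γ v
/-- The v-kernel: the unique minimal v-molecule. -/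
def IsKernel (Γ : V → Set V) (v : V) (K : Set V) : Prop :=
  Molecule Γ v K ∧ ∀ F, Molecule Γ v F → K ⊆ F
/-- Weak connectivity κ₀. -/
noncomputable def kappa0 (Γ : V → Set V) : ℕ :=
  sInf {n | ∃ X : Set V, X.Finite ∧ X.Nonempty ∧ (bd Γ X).ncard = n}
/-- Weak fragment. -/
def WeakFragment (Γ : V → Set V) (X : Set V) : Prop :=
  X.Finite ∧ X.Nonempty ∧ (bd Γ X).ncard = kappa0 Γ
/-- Weak atom: a weak fragment of minimum cardinality. -/
def WeakAtom (Γ : V → Set V) (X : Set V) : Prop :=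
  WeakFragment Γ X ∧ ∀ Y, WeakFragment Γ Y → X.ncard ≤ Y.ncard

/-!
Automorphisms of Γ carry molecules to molecules and hence, by uniqueness, `K_v` to `K_{φ v}`;
this makes `v ↦ Γ v ∩ K v` vertex-transitive. For the second claim let `v ∈ Γ w ∩ K w` with
`w ≠ v`. Then `w ∉ K v`, and if `w` had no Γ-predecessor in `K v`, the sets `K v ∪ K w` and
`K v ∩ K w` would be Moser sets for `w` and `v`. Submodularity of `|∂|` then makes `K v ∩ K w`
a `v`-molecule, so `K v ⊆ K w`; as all kernels have the same size, `K v = K w ∋ w`, a contradiction.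
-/

section Automorphisms

variable {Γ : V → Set V} {φ : V ≃ V}

lemma IsAuto.symm (h : IsAuto Γ φ) : IsAuto Γ φ.symm := by
  intro x
  rw [← φ.symm_image_image (Γ _), ← h, φ.apply_symm_apply]

lemma IsAuto.img_image (h : IsAuto Γ φ) (F : Set V) : img Γ (φ '' F) = φ '' img Γ F := by
  simp only [img, Set.biUnion_image, Set.image_iUnion₂]
  exact Set.iUnion₂_congr fun x _ => h x

lemma IsAuto.rev_apply (h : IsAuto Γ φ) (x : V) : rev Γ (φ x) = φ '' rev Γ x := by
  ext y
  obtain ⟨z, rfl⟩ := φ.surjective y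
  simp [rev, h z]

lemma IsAuto.bd_image (h : IsAuto Γ φ) (F : Set V) : bd Γ (φ '' F) = φ '' bd Γ F := by
  rw [bd, bd, h.img_image, Set.image_sdiff φ.injective]

lemma IsAuto.moserSet_image (h : IsAuto Γ φ) {x : V} {F : Set V} (hF : MoserSet Γ x F) :
    MoserSet Γ (φ x) (φ '' F) := by
  obtain ⟨hfin, hx, hrev⟩ := hF
  refine ⟨hfin.image _, Set.mem_image_of_mem φ hx, ?_⟩
  rw [h.rev_apply, ← Set.image_inter φ.injective, hrev, Set.image_singleton]

lemma IsAuto.ncard_bd_image (h : IsAuto Γ φ) (F : Set V) :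
    (bd Γ (φ '' F)).ncard = (bd Γ F).ncard := by
  rw [h.bd_image, Set.ncard_image_of_injective _ φ.injective]

lemma IsAuto.mu_apply (h : IsAuto Γ φ) (x : V) : mu Γ (φ x) = mu Γ x := by
  unfold mu
  congr 1
  ext n
  constructor
  · rintro ⟨F, hF, rfl⟩
    refine ⟨φ.symm '' F, ?_, h.symm.ncard_bd_image F⟩
    simpa using h.symm.moserSet_image hF
  · rintro ⟨F, hF, rfl⟩
    exact ⟨φ '' F, h.moserSet_image hF, h.ncard_bd_image F⟩

lemma IsAuto.molecule_image (h : IsAuto Γ φ) {x : V} {F : Set V} (hF : Molecule Γ x F) :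
    Molecule Γ (φ x) (φ '' F) :=
  ⟨h.moserSet_image hF.1, by rw [h.ncard_bd_image, hF.2, h.mu_apply]⟩

lemma IsAuto.isKernel_image (h : IsAuto Γ φ) {x : V} {K : Set V} (hK : IsKernel Γ x K) :
    IsKernel Γ (φ x) (φ '' K) := by
  refine ⟨h.molecule_image hK.1, fun F hF => ?_⟩
  have hF' : Molecule Γ x (φ.symm '' F) := by simpa using h.symm.molecule_image hF
  simpa using Set.image_mono (f := φ) (hK.2 _ hF')

end Automorphisms

section Submodularity

variable {Γ : V → Set V}

lemma img_finite (hlf : LocFin Γ) {F : Set V} (hF : F.Finite) : (img Γ F).Finite :=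
  hF.biUnion fun x _ => hlf x

lemma subset_img (hr : Refl Γ) (F : Set V) : F ⊆ img Γ F :=
  fun x hx => Set.mem_biUnion hx (hr x)

lemma img_union (A B : Set V) : img Γ (A ∪ B) = img Γ A ∪ img Γ B :=
  Set.biUnion_union A B Γ

lemma img_mono {A B : Set V} (h : A ⊆ B) : img Γ A ⊆ img Γ B :=
  Set.biUnion_subset_biUnion_left h

lemma img_inter_subset (A B : Set V) : img Γ (A ∩ B) ⊆ img Γ A ∩ img Γ B :=
  Set.subset_inter (img_mono Set.inter_subset_left) (img_mono Set.inter_subset_right)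

lemma ncard_bd_add_ncard (hr : Refl Γ) (hlf : LocFin Γ) {F : Set V} (hF : F.Finite) :
    (bd Γ F).ncard + F.ncard = (img Γ F).ncard :=
  Set.ncard_sdiff_add_ncard_of_subset (subset_img hr F) (img_finite hlf hF)

lemma ncard_bd_union_add_ncard_bd_inter_le (hr : Refl Γ) (hlf : LocFin Γ) {A B : Set V}
    (hA : A.Finite) (hB : B.Finite) :
    (bd Γ (A ∪ B)).ncard + (bd Γ (A ∩ B)).ncard ≤ (bd Γ A).ncard + (bd Γ B).ncard := by
  have hImg := Set.ncard_union_add_ncard_inter _ _ (img_finite hlf hA) (img_finite hlf hB)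
  have hSet := Set.ncard_union_add_ncard_inter _ _ hA hB
  have hInter : (img Γ (A ∩ B)).ncard ≤ (img Γ A ∩ img Γ B).ncard :=
    Set.ncard_le_ncard (img_inter_subset A B) ((img_finite hlf hA).inter_of_left _)
  have hU := ncard_bd_add_ncard hr hlf (hA.union hB)
  have hI := ncard_bd_add_ncard hr hlf (hA.inter_of_left B)
  have hA' := ncard_bd_add_ncard hr hlf hA
  have hB' := ncard_bd_add_ncard hr hlf hB
  rw [img_union] at hU
  omega

end Submodularity

section Kernels

variable {Γ : V → Set V}

lemma mu_le_ncard_bd {v : V} {F : Set V} (hF : MoserSet Γ v F) : mu Γ v ≤ (bd Γ F).ncard :=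
  Nat.sInf_le ⟨F, hF, rfl⟩

lemma MoserSet.inter {v : V} {A B : Set V} (hA : MoserSet Γ v A) (hvB : v ∈ B) :
    MoserSet Γ v (A ∩ B) := by
  refine ⟨hA.1.inter_of_left B, ⟨hA.2.1, hvB⟩, ?_⟩
  rw [← Set.inter_assoc, hA.2.2, Set.singleton_inter_of_mem hvB]

lemma MoserSet.union_of_notMem_img {w : V} {A B : Set V} (hA : A.Finite) (hB : MoserSet Γ w B)
    (hw : w ∉ img Γ A) : MoserSet Γ w (A ∪ B) := by
  refine ⟨hA.union hB.1, Or.inr hB.2.1, ?_⟩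
  have hempty : rev Γ w ∩ A = ∅ :=
    Set.eq_empty_of_forall_notMem fun y hy => hw (Set.mem_biUnion hy.2 hy.1)
  rw [Set.inter_union_distrib_left, hempty, Set.empty_union, hB.2.2]

lemma IsKernel.unique {v : V} {K₁ K₂ : Set V} (h₁ : IsKernel Γ v K₁) (h₂ : IsKernel Γ v K₂) :
    K₁ = K₂ :=
  (h₁.2 _ h₂.1).antisymm (h₂.2 _ h₁.1)

lemma IsKernel.ncard_eq (hvt : VT Γ) {v w : V} {Kv Kw : Set V} (hv : IsKernel Γ v Kv)
    (hw : IsKernel Γ w Kw) : Kv.ncard = Kw.ncard := by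
  obtain ⟨φ, hφ, rfl⟩ := hvt v w
  rw [hw.unique (hφ.isKernel_image hv), Set.ncard_image_of_injective _ φ.injective]

lemma IsKernel.subset_of_notMem_img (hr : Refl Γ) (hlf : LocFin Γ) {v w : V}
    {Kv Kw : Set V} (hv : IsKernel Γ v Kv) (hw : IsKernel Γ w Kw) (hvw : v ∈ Kw)
    (hwv : w ∉ img Γ Kv) : Kv ⊆ Kw := by
  have hUnion := mu_le_ncard_bd (MoserSet.union_of_notMem_img hv.1.1.1 hw.1.1 hwv)
  have hInter := mu_le_ncard_bd (hv.1.1.inter hvw)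
  have hSub := ncard_bd_union_add_ncard_bd_inter_le hr hlf hv.1.1.1 hw.1.1.1
  rw [hv.1.2, hw.1.2] at hSub
  have hMol : Molecule Γ v (Kv ∩ Kw) := ⟨hv.1.1.inter hvw, by omega⟩
  exact (hv.2 _ hMol).trans Set.inter_subset_right

end Kernels

/-- The kernel graph is vertex-transitive and Ω⁻(v) \ {v} ⊆ ∂(K_v). -/
theorem stmt8 {V : Type*} (Γ : V → Set V) (hvt : VT Γ) (hr : Refl Γ) (hlf : LocFin Γ)
    (K : V → Set V) (hK : ∀ v, IsKernel Γ v (K v)) :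
    VT (fun v => Γ v ∩ K v) ∧
      ∀ v : V, rev (fun v => Γ v ∩ K v) v \ {v} ⊆ bd Γ (K v) := by
  refine ⟨fun x y => ?_, fun v w ⟨⟨hvΓw, hvKw⟩, hwv⟩ => ?_⟩
  · obtain ⟨φ, hφ, hxy⟩ := hvt x y
    refine ⟨φ, fun z => ?_, hxy⟩
    show Γ (φ z) ∩ K (φ z) = φ '' (Γ z ∩ K z)
    rw [(hK (φ z)).unique (hφ.isKernel_image (hK z)), hφ z, Set.image_inter φ.injective]
  · have hwKv : w ∉ K v := fun hw =>
      hwv ((hK v).1.1.2.2.subset ⟨hvΓw, hw⟩)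
    refine ⟨by_contra fun himg => hwKv ?_, hwKv⟩
    have hSub := (hK v).subset_of_notMem_img hr hlf (hK w) hvKw himg
    rw [Set.eq_of_subset_of_ncard_le hSub ((hK w).ncard_eq hvt (hK v)).le (hK w).1.1.1]
    exact (hK w).1.1.2.1
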